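/- arXiv:1101.2756 — 6 statements merged into one kernel-verified Lean document; each statement's English description precedes it below -/
import Mathlib

section
/- Let G be an infinite Abelian group and S a TS-set of sequences in G. Then: (1) a group homomorphism χ : G → 𝕋 is continuous with respect to τ_S if and only if χ ∈ s_S(G_d^), i.e., χ(u_n) → 1 in 𝕋 for every sequence (u_n) ∈ S; (2) the von Neumann radical of (G, τ_S) equals the annihilator of s_S(G_d^), i.e., n(G, τ_S) = { g ∈ G : χ(g) = 1 for every χ ∈ s_S(G_d^) }. -/
open Filter Topology

noncomputable section

/-- The circle group `𝕋 = ℝ/ℤ`. -/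
abbrev 𝕋 : Type := AddCircle (1 : ℝ)

/-- The sequence `u` converges to `0` in the topology `τ`. -/
def TendsToZero {G : Type*} [AddCommGroup G] (τ : TopologicalSpace G) (u : ℕ → G) : Prop :=
  Filter.Tendsto u Filter.atTop (@nhds G τ 0)

/-- `τ` is a Hausdorff group topology on `G` in which every sequence of `S` converges to `0`. -/
def IsTopFor {G : Type*} [AddCommGroup G] (S : Set (ℕ → G)) (τ : TopologicalSpace G) : Prop :=
  @IsTopologicalAddGroup G τ _ ∧ @T2Space G τ ∧ ∀ u ∈ S, TendsToZero τ u

/-- `S` is a `TS`-set of sequences in `G`. -/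
def IsTSSet {G : Type*} [AddCommGroup G] (S : Set (ℕ → G)) : Prop :=
  ∃ τ : TopologicalSpace G, IsTopFor S τ

/-- `τ` is the finest Hausdorff group topology on `G` in which every sequence of `S`
converges to `0` (recall that in Mathlib's order on topologies, `≤` means "finer"). -/
def IsFinestFor {G : Type*} [AddCommGroup G] (S : Set (ℕ → G)) (τ : TopologicalSpace G) : Prop :=
  IsTopFor S τ ∧ ∀ τ' : TopologicalSpace G, IsTopFor S τ' → τ ≤ τ'

/-- The group topology `τ` on `G` is totally bounded (precompact): every neighborhood `U` of `0`
has finitely many translates covering `G`. -/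
def IsPrecompactTop {G : Type*} [AddCommGroup G] (τ : TopologicalSpace G) : Prop :=
  ∀ U ∈ @nhds G τ 0, ∃ F : Finset G, ∀ g : G, ∃ f ∈ F, g - f ∈ U

/-- `τ` is a totally bounded Hausdorff group topology on `G` in which every sequence of `S`
converges to `0`. -/
def IsPTopFor {G : Type*} [AddCommGroup G] (S : Set (ℕ → G)) (τ : TopologicalSpace G) : Prop :=
  IsTopFor S τ ∧ IsPrecompactTop τ

/-- `S` is a `TBS`-set of sequences in `G`. -/
def IsTBSSet {G : Type*} [AddCommGroup G] (S : Set (ℕ → G)) : Prop :=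
  ∃ τ : TopologicalSpace G, IsPTopFor S τ

/-- `τ` is the finest totally bounded Hausdorff group topology on `G` in which every sequence
of `S` converges to `0`. -/
def IsFinestPFor {G : Type*} [AddCommGroup G] (S : Set (ℕ → G)) (τ : TopologicalSpace G) : Prop :=
  IsPTopFor S τ ∧ ∀ τ' : TopologicalSpace G, IsPTopFor S τ' → τ ≤ τ'

/-- `s_S(G_d^∧)`: the characters `χ` of the discrete group `G` with `χ(u_n) → 0` for all
`u ∈ S`. -/
def sS {G : Type*} [AddCommGroup G] (S : Set (ℕ → G)) : Set (G →+ 𝕋) :=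
  {χ | ∀ u ∈ S, Filter.Tendsto (fun n => χ (u n)) Filter.atTop (nhds (0 : 𝕋))}

/-- `T_H`: the coarsest (initial) topology on `G` making every character of `H` continuous. -/
def TH {G : Type*} [AddCommGroup G] (H : Set (G →+ 𝕋)) : TopologicalSpace G :=
  ⨅ χ ∈ H, TopologicalSpace.induced (χ : G → 𝕋) inferInstance

/-- `(G, τ)` is maximally almost periodic: continuous characters separate points. -/
def IsMAP {G : Type*} [AddCommGroup G] (τ : TopologicalSpace G) : Prop :=
  ∀ g : G, g ≠ 0 → ∃ χ : G →+ 𝕋, @Continuous G 𝕋 τ _ χ ∧ χ g ≠ 0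

/-- The dual group of `(G, τ)`: the subgroup of the character group of `G_d` consisting of
`τ`-continuous characters. -/
def dual {G : Type*} [AddCommGroup G] (τ : TopologicalSpace G) : AddSubgroup (G →+ 𝕋) where
  carrier := {χ : G →+ 𝕋 | @Continuous G 𝕋 τ _ χ}
  zero_mem' := by
    letI := τ
    show Continuous fun _ : G => (0 : 𝕋)
    exact continuous_const
  add_mem' := by
    intro a b ha hb
    letI := τ
    show Continuous fun g : G => a g + b g
    exact Continuous.add ha hb
  neg_mem' := by
    intro a ha
    letI := τ
    show Continuous fun g : G => -(a g)
    exact Continuous.neg ha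

/-- The compact-open topology on the dual group of `(G, τ)`. -/
def coTop {G : Type*} [AddCommGroup G] (τ : TopologicalSpace G) :
    TopologicalSpace ↥(dual τ) :=
  TopologicalSpace.generateFrom
    {T | ∃ (K : Set G) (U : Set 𝕋), @IsCompact G τ K ∧ IsOpen U ∧
          T = {χ : ↥(dual τ) | ∀ g ∈ K, (χ : G →+ 𝕋) g ∈ U}}

/-- Evaluation at `g ∈ G`, as a character of the dual group of `(G, τ)`; this is the value of the
canonical map `G → bG` at `g`. -/
def evalHom {G : Type*} [AddCommGroup G] (τ : TopologicalSpace G) (g : G) :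
    ↥(dual τ) →+ 𝕋 where
  toFun χ := (χ : G →+ 𝕋) g
  map_zero' := rfl
  map_add' _ _ := rfl

/-- The natural (compact-open = pointwise) topology on the character group `A_d^∧` of a
discrete abelian group `A`. -/
def Xtop (A : Type*) [AddCommGroup A] : TopologicalSpace (A →+ 𝕋) :=
  TopologicalSpace.induced (fun χ : A →+ 𝕋 => (χ : A → 𝕋)) Pi.topologicalSpace

/-- For a sequence `u` of characters of `X`, `su u = s_u(X) = {x | u_n(x) → 0}`. -/
def su {X : Type*} [AddCommGroup X] (u : ℕ → (X →+ 𝕋)) : Set X :=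
  {x | Filter.Tendsto (fun n => u n x) Filter.atTop (nhds (0 : 𝕋))}

/-- The `g`-closure of a subset `H` of the abelian topological group `(X, τ)`: the intersection
of all `s_u(X)` over sequences `u` of continuous characters of `(X, τ)` with `H ⊆ s_u(X)`. -/
def gClosure {X : Type*} [AddCommGroup X] (τ : TopologicalSpace X) (H : Set X) : Set X :=
  ⋂ u ∈ {u : ℕ → (X →+ 𝕋) | (∀ n, @Continuous X 𝕋 τ _ (u n)) ∧ H ⊆ su u}, su u

/-- `H` is a `g`-closed subset of `(X, τ)`. -/
def IsGClosed {X : Type*} [AddCommGroup X] (τ : TopologicalSpace X) (H : Set X) : Prop :=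
  gClosure τ H = H

/-- The weight of a topology: the least cardinality of a topological basis. -/
def topWeight {X : Type*} (τ : TopologicalSpace X) : Cardinal :=
  ⨅ B ∈ {B : Set (Set X) | @TopologicalSpace.IsTopologicalBasis X τ B}, Cardinal.mk B

/-- The group uniformity of the group topology `τ` on `G`. -/
def uniformOf {G : Type*} [AddCommGroup G] (τ : TopologicalSpace G)
    (h : @IsTopologicalAddGroup G τ _) : UniformSpace G :=
  @IsTopologicalAddGroup.rightUniformSpace G _ τ h

end

/-- Theorem 1.5: Let `G` be an infinite Abelian group and `S` a `TS`-set of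
sequences in `G`. Then (1) a character `χ : G → 𝕋` is `τ_S`-continuous iff `χ ∈ s_S(G_d^∧)`,
and (2) the von Neumann radical of `(G, τ_S)` is the annihilator of `s_S(G_d^∧)`. -/
theorem statement_0 {G : Type*} [AddCommGroup G] [Infinite G]
    (S : Set (ℕ → G)) (τS : TopologicalSpace G) (hτS : IsFinestFor S τS) :
    (∀ χ : G →+ 𝕋, @Continuous G 𝕋 τS _ χ ↔ χ ∈ sS S) ∧
    {g : G | ∀ χ : G →+ 𝕋, @Continuous G 𝕋 τS _ χ → χ g = 0} =
      {g : G | ∀ χ ∈ sS S, χ g = 0} := by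
  obtain ⟨⟨hgrp, ht2, hconv⟩, hfinest⟩ := hτS
  have key : ∀ χ : G →+ 𝕋, @Continuous G 𝕋 τS _ χ ↔ χ ∈ sS S := by
    intro χ
    constructor
    · intro hcont u hu
      have h0 : Filter.Tendsto u Filter.atTop (@nhds G τS 0) := hconv u hu
      have := ((@Continuous.tendsto G 𝕋 τS _ χ hcont 0).comp h0)
      simpa [map_zero, Function.comp_def] using this
    · intro hχ
      set τi : TopologicalSpace G := TopologicalSpace.induced (χ : G → 𝕋) inferInstance with hτi
      have hgi : @IsTopologicalAddGroup G τi _ := topologicalAddGroup_induced χ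
      set τ' : TopologicalSpace G := τS ⊓ τi with hτ'
      have hle : τS ≤ τ' := by
        apply hfinest
        refine ⟨topologicalAddGroup_inf hgrp hgi, t2Space_antitone (show τ' ≤ τS from inf_le_left) ht2, ?_⟩
        intro u hu
        unfold TendsToZero
        rw [hτ', nhds_inf (t₁ := τS) (t₂ := τi), tendsto_inf]
        refine ⟨hconv u hu, ?_⟩
        rw [hτi, nhds_induced]
        rw [tendsto_comap_iff]
        simpa [map_zero, Function.comp_def] using hχ u hu
      have hcont' : @Continuous G 𝕋 τ' _ χ := by
        apply continuous_le_dom (t₂ := τ') (t₁ := τi) inf_le_right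
        exact continuous_induced_dom
      exact continuous_le_dom hle hcont'
  refine ⟨key, ?_⟩
  ext g
  simp only [Set.mem_setOf_eq]
  constructor
  · intro h χ hχ; exact h χ ((key χ).mpr hχ)
  · intro h χ hχ; exact h χ ((key χ).mp hχ)
end

section
/- Let G be an infinite Abelian group and S a TBS-set of sequences in G (so S is also a TS-set and τ_{bS} ⊆ τ_S). Then the conjugate of the identity map j : (G, τ_S) → (G, τ_{bS}) is a continuous isomorphism j^ : (G, τ_{bS})^ → (G, τ_S)^; that is, a group homomorphism χ : G → 𝕋 is τ_{bS}-continuous if and only if it is τ_S-continuous, and the resulting identity map between the two dual groups, each endowed with its compact-open topology, is continuous. -/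
open Filter Topology

section Aux

open TopologicalSpace

/-- In a topological additive group, every neighborhood of `0` contains a set `V` with
`V - V ⊆ U`. -/
lemma aux_exists_sub_nhds {G : Type*} [AddCommGroup G] (τ : TopologicalSpace G)
    (hτ : @IsTopologicalAddGroup G τ _) {U : Set G} (hU : U ∈ @nhds G τ 0) :
    ∃ V ∈ @nhds G τ 0, ∀ a ∈ V, ∀ b ∈ V, a - b ∈ U := by
  letI := τ
  have h : Filter.Tendsto (fun p : G × G => p.1 - p.2) (nhds ((0 : G), (0 : G))) (nhds 0) := by
    have := (continuous_sub (G := G)).tendsto ((0 : G), (0 : G))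
    simpa using this
  have h2 : (fun p : G × G => p.1 - p.2) ⁻¹' U ∈ nhds ((0 : G), (0 : G)) := h hU
  rw [nhds_prod_eq, Filter.mem_prod_iff] at h2
  obtain ⟨V₁, hV₁, V₂, hV₂, hsub⟩ := h2
  refine ⟨V₁ ∩ V₂, Filter.inter_mem hV₁ hV₂, fun a ha b hb => ?_⟩
  exact hsub (Set.mk_mem_prod ha.1 hb.2)

/-- The topology induced by a character is totally bounded. -/
lemma aux_precompact_induced {G : Type*} [AddCommGroup G] (χ : G →+ 𝕋) :
    IsPrecompactTop (TopologicalSpace.induced (χ : G → 𝕋) inferInstance) := by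
  classical
  intro U hU
  rw [nhds_induced] at hU
  rw [map_zero] at hU
  obtain ⟨V, hV, hVU⟩ := Filter.mem_comap.mp hU
  obtain ⟨W, hW, hWV⟩ := aux_exists_sub_nhds inferInstance inferInstance hV
  obtain ⟨W', hW'W, hW'open, hW'0⟩ := mem_nhds_iff.mp hW
  -- cover 𝕋 by translates of W'
  have hcov : (Set.univ : Set 𝕋) ⊆ ⋃ x : 𝕋, (fun y => y - x) ⁻¹' W' := by
    intro y _
    exact Set.mem_iUnion.mpr ⟨y, by simpa using hW'0⟩
  obtain ⟨T, hT⟩ := IsCompact.elim_finite_subcover isCompact_univ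
    (fun x : 𝕋 => (fun y => y - x) ⁻¹' W')
    (fun x => hW'open.preimage (continuous_sub_right x)) hcov
  set f : 𝕋 → G := fun x => if h : ∃ g : G, χ g - x ∈ W' then h.choose else 0 with hf
  refine ⟨T.image f, fun g => ?_⟩
  have : χ g ∈ ⋃ x ∈ T, (fun y => y - x) ⁻¹' W' := hT (Set.mem_univ _)
  obtain ⟨x, hxT, hgx⟩ := Set.mem_iUnion₂.mp this
  have hex : ∃ g' : G, χ g' - x ∈ W' := ⟨g, hgx⟩
  refine ⟨f x, Finset.mem_image_of_mem f hxT, hVU ?_⟩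
  have hfx : χ (f x) - x ∈ W' := by
    rw [hf]; simp only [dif_pos hex]; exact hex.choose_spec
  have key : (χ g - x) - (χ (f x) - x) ∈ V := hWV _ (hW'W hgx) _ (hW'W hfx)
  have : χ g - χ (f x) ∈ V := by
    rwa [show (χ g - x) - (χ (f x) - x) = χ g - χ (f x) by abel] at key
  show χ (g - f x) ∈ V
  rwa [map_sub]

/-- The infimum of two totally bounded group topologies is totally bounded. -/
lemma aux_precompact_inf {G : Type*} [AddCommGroup G] (τ₁ τ₂ : TopologicalSpace G)
    (hg₁ : @IsTopologicalAddGroup G τ₁ _) (hg₂ : @IsTopologicalAddGroup G τ₂ _)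
    (h₁ : IsPrecompactTop τ₁) (h₂ : IsPrecompactTop τ₂) :
    IsPrecompactTop (τ₁ ⊓ τ₂) := by
  classical
  intro U hU
  rw [@nhds_inf G τ₁ τ₂ 0] at hU
  obtain ⟨U₁, hU₁, U₂, hU₂, hUeq⟩ := Filter.mem_inf_iff.mp hU
  obtain ⟨V₁, hV₁, hV₁sub⟩ := aux_exists_sub_nhds τ₁ hg₁ hU₁
  obtain ⟨V₂, hV₂, hV₂sub⟩ := aux_exists_sub_nhds τ₂ hg₂ hU₂
  obtain ⟨F₁, hF₁⟩ := h₁ V₁ hV₁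
  obtain ⟨F₂, hF₂⟩ := h₂ V₂ hV₂
  set f : G × G → G := fun p =>
    if h : ∃ x : G, x - p.1 ∈ V₁ ∧ x - p.2 ∈ V₂ then h.choose else 0 with hf
  refine ⟨(F₁ ×ˢ F₂).image f, fun g => ?_⟩
  obtain ⟨a, ha, hga⟩ := hF₁ g
  obtain ⟨b, hb, hgb⟩ := hF₂ g
  have hex : ∃ x : G, x - a ∈ V₁ ∧ x - b ∈ V₂ := ⟨g, hga, hgb⟩
  refine ⟨f (a, b), Finset.mem_image_of_mem f (Finset.mem_product.mpr ⟨ha, hb⟩), ?_⟩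
  have hspec : f (a, b) - a ∈ V₁ ∧ f (a, b) - b ∈ V₂ := by
    rw [hf]; simp only [dif_pos hex]; exact hex.choose_spec
  have m₁ : g - f (a, b) ∈ U₁ := by
    have := hV₁sub _ hga _ hspec.1
    rwa [show (g - a) - (f (a, b) - a) = g - f (a, b) by abel] at this
  have m₂ : g - f (a, b) ∈ U₂ := by
    have := hV₂sub _ hgb _ hspec.2
    rwa [show (g - b) - (f (a, b) - b) = g - f (a, b) by abel] at this
  rw [hUeq]
  exact ⟨m₁, m₂⟩

/-- The key lemma: every `τ_S`-continuous character is `τ_{bS}`-continuous. -/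
lemma aux_key {G : Type*} [AddCommGroup G] (S : Set (ℕ → G))
    (τS τbS : TopologicalSpace G) (hS : IsFinestFor S τS) (hbS : IsFinestPFor S τbS)
    (χ : G →+ 𝕋) (hχ : @Continuous G 𝕋 τS _ χ) : @Continuous G 𝕋 τbS _ χ := by
  set τi : TopologicalSpace G := TopologicalSpace.induced (χ : G → 𝕋) inferInstance with hτi
  have hgi : @IsTopologicalAddGroup G τi _ := topologicalAddGroup_induced χ
  have hgb : @IsTopologicalAddGroup G τbS _ := hbS.1.1.1
  have hg' : @IsTopologicalAddGroup G (τbS ⊓ τi) _ := topologicalAddGroup_inf hgb hgi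
  have ht2 : @T2Space G (τbS ⊓ τi) := t2Space_antitone inf_le_left hbS.1.1.2.1
  have hconv : ∀ u ∈ S, TendsToZero (τbS ⊓ τi) u := by
    intro u hu
    unfold TendsToZero
    rw [@nhds_inf G τbS τi 0]
    refine Filter.tendsto_inf.mpr ⟨hbS.1.1.2.2 u hu, ?_⟩
    rw [hτi, nhds_induced]
    rw [Filter.tendsto_comap_iff]
    have h0 : Filter.Tendsto u Filter.atTop (@nhds G τS 0) := hS.1.2.2 u hu
    have := Filter.Tendsto.comp (@Continuous.tendsto G 𝕋 τS _ _ hχ 0) h0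
    simpa using this
  have hpre : IsPrecompactTop (τbS ⊓ τi) :=
    aux_precompact_inf τbS τi hgb hgi hbS.1.2 (aux_precompact_induced χ)
  have hle : τbS ≤ τbS ⊓ τi := hbS.2 _ ⟨⟨hg', ht2, hconv⟩, hpre⟩
  have : τbS ≤ τi := le_trans hle inf_le_right
  exact continuous_iff_le_induced.mpr this

end Aux

/-- Corollary 1.7: For a `TBS`-set `S` in an infinite Abelian group `G`, a
character is `τ_{bS}`-continuous iff it is `τ_S`-continuous, and the conjugate of the identity
map `j : (G, τ_S) → (G, τ_{bS})` is a continuous isomorphism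
`j^∧ : (G, τ_{bS})^∧ → (G, τ_S)^∧` of the dual groups with their compact-open topologies. -/
theorem statement_2 {G : Type*} [AddCommGroup G] [Infinite G] (S : Set (ℕ → G))
    (τS τbS : TopologicalSpace G) (hS : IsFinestFor S τS) (hbS : IsFinestPFor S τbS) :
    (∀ χ : G →+ 𝕋, @Continuous G 𝕋 τbS _ χ ↔ @Continuous G 𝕋 τS _ χ) ∧
    ∃ e : ↥(dual τbS) ≃+ ↥(dual τS),
      (∀ χ : ↥(dual τbS), ((e χ : G →+ 𝕋)) = ((χ : G →+ 𝕋))) ∧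
      @Continuous _ _ (coTop τbS) (coTop τS) ⇑e := by
  have hle : τS ≤ τbS := hS.2 τbS hbS.1.1
  have hiff : ∀ χ : G →+ 𝕋, @Continuous G 𝕋 τbS _ χ ↔ @Continuous G 𝕋 τS _ χ := by
    intro χ
    constructor
    · intro h
      exact continuous_le_dom hle h
    · intro h
      exact aux_key S τS τbS hS hbS χ h
  refine ⟨hiff, ?_⟩
  have hEq : dual τbS = dual τS := by
    ext χ
    exact hiff χ
  refine ⟨AddEquiv.addSubgroupCongr hEq, fun χ => rfl, ?_⟩
  rw [show coTop τS = TopologicalSpace.generateFrom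
      {T | ∃ (K : Set G) (U : Set 𝕋), @IsCompact G τS K ∧ IsOpen U ∧
          T = {χ : ↥(dual τS) | ∀ g ∈ K, (χ : G →+ 𝕋) g ∈ U}} from rfl]
  letI := coTop τbS
  rw [continuous_generateFrom_iff]
  rintro T ⟨K, U, hK, hU, rfl⟩
  have hK' : @IsCompact G τbS K := by
    have hid : @Continuous G G τS τbS id := continuous_id_of_le hle
    simpa using @IsCompact.image G G τS τbS K id hK hid
  have hset : (⇑(AddEquiv.addSubgroupCongr hEq)) ⁻¹'
      {χ : ↥(dual τS) | ∀ g ∈ K, (χ : G →+ 𝕋) g ∈ U} =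
      {χ : ↥(dual τbS) | ∀ g ∈ K, (χ : G →+ 𝕋) g ∈ U} := by
    ext χ
    rfl
  rw [hset]
  exact TopologicalSpace.isOpen_generateFrom_of_mem ⟨K, U, hK', hU, rfl⟩
end

section
/- Let (G, τ) be an infinite Hausdorff Abelian topological group whose underlying topological space is sequential. Then the group of τ-continuous characters of G, viewed as a subgroup of the compact group G_d^ (every τ-continuous character of G is in particular a character of G_d), is a g-closed subgroup of G_d^. -/
open Filter Topology

/-- Corollary 1.10: The dual group of an infinite sequential Hausdorff Abelian
topological group `(G, τ)` (i.e. the group of `τ`-continuous characters) is a `g`-closed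
subgroup of the compact group `G_d^∧`. -/
theorem statement_5 {G : Type*} [AddCommGroup G] [Infinite G] (τ : TopologicalSpace G)
    (hg : @IsTopologicalAddGroup G τ _) (h2 : @T2Space G τ) (hseq : @SequentialSpace G τ) :
    IsGClosed (Xtop G) {χ : G →+ 𝕋 | @Continuous G 𝕋 τ _ χ} := by
  letI := τ
  unfold IsGClosed
  apply Set.Subset.antisymm
  · intro χ hχ
    show Continuous χ
    rw [continuous_iff_seqContinuous]
    intro x p hx
    have key : Tendsto (fun n => χ (x n - p)) atTop (𝓝 0) := by
      set u : ℕ → ((G →+ 𝕋) →+ 𝕋) := fun n =>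
        { toFun := fun ψ => ψ (x n - p), map_zero' := rfl, map_add' := fun _ _ => rfl } with hu
      have hmem : u ∈ {u : ℕ → ((G →+ 𝕋) →+ 𝕋) |
          (∀ n, @Continuous _ _ (Xtop G) _ (u n)) ∧
          {χ : G →+ 𝕋 | @Continuous G 𝕋 τ _ χ} ⊆ su u} := by
        constructor
        · intro n
          have h1 : Continuous fun f : G → 𝕋 => f (x n - p) := continuous_apply _
          have h2 : @Continuous (G →+ 𝕋) (G → 𝕋) (Xtop G) _
              (fun χ : G →+ 𝕋 => (χ : G → 𝕋)) := continuous_induced_dom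
          exact @Continuous.comp (G →+ 𝕋) (G → 𝕋) 𝕋 (Xtop G) _ _ _ _ h1 h2
        · intro ψ hψ
          have hψc : Continuous ψ := hψ
          have hx0 : Tendsto (fun n => x n - p) atTop (𝓝 0) := by
            have := hx.sub_const p
            simpa using this
          have := (hψc.tendsto 0).comp hx0
          show Tendsto (fun n => ψ (x n - p)) atTop (𝓝 0)
          simpa [Function.comp_def] using this
      have h := hχ
      simp only [gClosure, Set.mem_iInter] at h
      exact h u hmem
    have h2 : Tendsto (fun n => χ (x n - p) + χ p) atTop (𝓝 (0 + χ p)) := key.add_const _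
    have heq : ∀ n, χ (x n - p) + χ p = χ (x n) := by
      intro n; rw [map_sub, sub_add_cancel]
    simp only [heq, zero_add] at h2
    exact h2
  · intro χ hχ
    simp only [gClosure, Set.mem_iInter]
    intro u hu
    exact hu.2 hχ
end

section
/- Let G be a MAP Abelian topological group such that the dual group G^ (with the compact-open topology) is an s-group. Then 𝔟(G^^), the image of the bidual G^^ in the Bohr compactification bG under the canonical monomorphism 𝔟, is a dense g-closed subgroup of bG. -/
open Filter Topology

noncomputable section AuxSection

local instance : Fact ((0 : ℝ) < 1) := ⟨one_pos⟩

namespace Aux6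

open MeasureTheory

variable {X : Type*} [AddCommGroup X]

local instance : TopologicalSpace (X →+ 𝕋) := Xtop X

lemma inducing_coe : Topology.IsInducing (fun χ : X →+ 𝕋 => (χ : X → 𝕋)) := ⟨rfl⟩

lemma embedding_coe : Topology.IsEmbedding (fun χ : X →+ 𝕋 => (χ : X → 𝕋)) :=
  ⟨inducing_coe, DFunLike.coe_injective⟩

/-- coercion as an AddMonoidHom -/
def coeHom : (X →+ 𝕋) →+ (X → 𝕋) where
  toFun χ := ⇑χ
  map_zero' := rfl
  map_add' _ _ := rfl

local instance : IsTopologicalAddGroup (X →+ 𝕋) :=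
  Topology.IsInducing.topologicalAddGroup (coeHom (X := X)) inducing_coe

local instance : T2Space (X →+ 𝕋) := embedding_coe.t2Space

lemma isClosed_range_coe :
    IsClosed (Set.range (fun χ : X →+ 𝕋 => (χ : X → 𝕋))) := by
  have : Set.range (fun χ : X →+ 𝕋 => (χ : X → 𝕋)) =
      ⋂ (a : X) (b : X), {f : X → 𝕋 | f (a + b) = f a + f b} := by
    ext f
    simp only [Set.mem_range, Set.mem_iInter, Set.mem_setOf_eq]
    constructor
    · rintro ⟨χ, rfl⟩ a b; exact χ.map_add a b
    · intro h
      exact ⟨AddMonoidHom.mk' f (fun a b => h a b), rfl⟩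
  rw [this]
  exact isClosed_iInter fun a => isClosed_iInter fun b =>
    isClosed_eq (continuous_apply _) ((continuous_apply a).add (continuous_apply b))

local instance : CompactSpace (X →+ 𝕋) := by
  refine ⟨?_⟩
  rw [embedding_coe.isCompact_iff]
  rw [Set.image_univ]
  exact isClosed_range_coe.isCompact

local instance : MeasurableSpace (X →+ 𝕋) := borel _
local instance : BorelSpace (X →+ 𝕋) := ⟨rfl⟩

/-- normalized Haar measure on the compact group `X →+ 𝕋` -/
def muB : Measure (X →+ 𝕋) := Measure.addHaarMeasure ⊤

instance : IsProbabilityMeasure (muB (X := X)) := IsProbabilityMeasure.mk Measure.addHaarMeasure_self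

instance : Measure.IsAddHaarMeasure (muB (X := X)) :=
  Measure.isAddHaarMeasure_addHaarMeasure ⊤

example : Measure.IsAddLeftInvariant (muB (X := X)) := inferInstance
example : (muB (X := X)).IsOpenPosMeasure := inferInstance


section Chars

/-- evaluation character as a continuous ℂ-valued function on `X →+ 𝕋` -/
def charFn (x : X) : C(X →+ 𝕋, ℂ) :=
  ⟨fun χ => (AddCircle.toCircle (χ x) : ℂ),
    continuous_subtype_val.comp (AddCircle.continuous_toCircle.comp
      ((continuous_apply x).comp inducing_coe.continuous))⟩

lemma charFn_apply (x : X) (χ : X →+ 𝕋) :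
    charFn x χ = (AddCircle.toCircle (χ x) : ℂ) := rfl

lemma charFn_zero : charFn (0 : X) = 1 := by
  ext χ
  simp [charFn_apply, map_zero]

lemma charFn_mul (x y : X) : charFn x * charFn y = charFn (x + y) := by
  ext χ
  simp only [ContinuousMap.mul_apply, charFn_apply, map_add, AddCircle.toCircle_add,
    Circle.coe_mul]

lemma toCircle_neg (t : 𝕋) : AddCircle.toCircle (-t) = (AddCircle.toCircle t)⁻¹ := by
  apply eq_inv_of_mul_eq_one_left
  rw [← AddCircle.toCircle_add, neg_add_cancel, AddCircle.toCircle_zero]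

lemma charFn_star (x : X) : star (charFn x) = charFn (-x) := by
  ext χ
  simp only [ContinuousMap.star_apply, charFn_apply, map_neg, toCircle_neg]
  rw [Circle.coe_inv_eq_conj]
  rfl

/-- The star subalgebra generated by the characters. -/
def charSubalgebra : StarSubalgebra ℂ C(X →+ 𝕋, ℂ) where
  toSubalgebra := Algebra.adjoin ℂ (Set.range charFn)
  star_mem' := by
    show Algebra.adjoin ℂ (Set.range (charFn (X := X))) ≤
      star (Algebra.adjoin ℂ (Set.range (charFn (X := X))))
    refine Algebra.adjoin_le ?_
    rintro - ⟨x, rfl⟩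
    exact Algebra.subset_adjoin ⟨-x, (charFn_star x).symm⟩

theorem charSubalgebra_coe :
    Subalgebra.toSubmodule (charSubalgebra (X := X)).toSubalgebra =
      Submodule.span ℂ (Set.range charFn) := by
  apply Algebra.adjoin_eq_span_of_subset
  refine Set.Subset.trans ?_ Submodule.subset_span
  intro x hx
  refine Submonoid.closure_induction (fun _ => id) ⟨0, charFn_zero⟩ ?_ hx
  rintro - - - - ⟨m, rfl⟩ ⟨n, rfl⟩
  exact ⟨m + n, (charFn_mul m n).symm⟩

theorem charSubalgebra_separatesPoints : (charSubalgebra (X := X)).SeparatesPoints := by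
  intro χ ψ hxy
  obtain ⟨x, hx⟩ := DFunLike.ne_iff.mp hxy
  refine ⟨_, ⟨charFn x, Algebra.subset_adjoin ⟨x, rfl⟩, rfl⟩, ?_⟩
  simp only [charFn_apply]
  intro h
  rw [Circle.coe_inj] at h
  exact hx (AddCircle.injective_toCircle one_ne_zero h)

theorem charSubalgebra_closure_eq_top :
    (charSubalgebra (X := X)).topologicalClosure = ⊤ :=
  ContinuousMap.starSubalgebra_topologicalClosure_eq_top_of_separatesPoints charSubalgebra
    charSubalgebra_separatesPoints

theorem span_char_closure_eq_top :
    (Submodule.span ℂ (Set.range (charFn (X := X)))).topologicalClosure = ⊤ := by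
  rw [← charSubalgebra_coe]
  exact congr_arg (Subalgebra.toSubmodule <| StarSubalgebra.toSubalgebra ·)
    charSubalgebra_closure_eq_top

end Chars


/-- Orthogonality: a nontrivial continuous character integrates to zero w.r.t. Haar. -/
lemma integral_char_eq_zero {G : Type*} [AddCommGroup G] [TopologicalSpace G]
    [IsTopologicalAddGroup G] [MeasurableSpace G] [BorelSpace G]
    (μ : Measure G) [IsProbabilityMeasure μ] [μ.IsAddLeftInvariant]
    (φ : G → ℂ) (hhom : ∀ a b, φ (a + b) = φ a * φ b) (g : G) (hg : φ g ≠ 1) :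
    ∫ χ, φ χ ∂μ = 0 := by
  have h1 : ∫ χ, φ (g + χ) ∂μ = ∫ χ, φ χ ∂μ := integral_add_left_eq_self φ g
  simp_rw [hhom g] at h1
  rw [integral_const_mul] at h1
  have h2 : (φ g - 1) * ∫ χ, φ χ ∂μ = 0 := by rw [sub_mul, one_mul, h1, sub_self]
  rcases mul_eq_zero.mp h2 with h | h
  · exact absurd (sub_eq_zero.mp h) hg
  · exact h

section Density

set_option maxHeartbeats 1000000 in
set_option synthInstance.maxHeartbeats 200000 in
theorem dense_of_separating (H : AddSubgroup (X →+ 𝕋))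
    (hsep : ∀ x : X, x ≠ 0 → ∃ χ ∈ H, χ x ≠ 0) :
    Dense (H : Set (X →+ 𝕋)) := by
  set K := H.topologicalClosure with hKdef
  have hKcoe : (K : Set (X →+ 𝕋)) = closure (H : Set (X →+ 𝕋)) := rfl
  have hKclosed : IsClosed (K : Set (X →+ 𝕋)) := isClosed_closure
  haveI : CompactSpace K := isCompact_iff_compactSpace.mp hKclosed.isCompact
  haveI : Nonempty K := ⟨0⟩
  letI : MeasurableSpace K := borel _
  haveI : BorelSpace K := ⟨rfl⟩
  set μK : Measure K := Measure.addHaarMeasure ⊤ with hμK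
  haveI : IsProbabilityMeasure μK := IsProbabilityMeasure.mk Measure.addHaarMeasure_self
  haveI : Measure.IsAddHaarMeasure μK := Measure.isAddHaarMeasure_addHaarMeasure ⊤
  have hcs : ∀ {E : Type} [NormedAddCommGroup E] (f : (X →+ 𝕋) → E), Continuous f →
      Integrable f (muB (X := X)) := by
    intro E _ f hf
    exact hf.integrable_of_hasCompactSupport (isClosed_tsupport _).isCompact
  have hcsK : ∀ (f : (X →+ 𝕋) → ℂ), Continuous f →
      Integrable (fun y : K => f ↑y) μK := by
    intro f hf
    exact (hf.comp continuous_subtype_val).integrable_of_hasCompactSupport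
      (isClosed_tsupport _).isCompact
  have intB : ∀ f : C(X →+ 𝕋, ℂ), Integrable f (muB (X := X)) := fun f => hcs f f.continuous
  have intK : ∀ f : C(X →+ 𝕋, ℂ), Integrable (fun y : K => f ↑y) μK :=
    fun f => hcsK f f.continuous
  -- the submodule where the two integrals agree
  set P : Submodule ℂ C(X →+ 𝕋, ℂ) :=
    { carrier := {f | ∫ χ, f χ ∂(muB (X := X)) = ∫ y : K, f ↑y ∂μK}
      add_mem' := by
        intro f g hf hg
        simp only [Set.mem_setOf_eq, ContinuousMap.add_apply] at *
        rw [integral_add (intB f) (intB g), integral_add (intK f) (intK g), hf, hg]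
      zero_mem' := by simp
      smul_mem' := by
        intro c f hf
        simp only [Set.mem_setOf_eq, ContinuousMap.smul_apply, smul_eq_mul] at *
        rw [integral_const_mul, integral_const_mul, hf] } with hPdef
  have hrange : Set.range (charFn (X := X)) ⊆ (P : Set C(X →+ 𝕋, ℂ)) := by
    rintro - ⟨x, rfl⟩
    by_cases hx : ∃ χ ∈ H, χ x ≠ 0
    · obtain ⟨χ₀, hχ₀H, hχ₀⟩ := hx
      have htchom : ∀ a b : X →+ 𝕋, charFn x (a + b) = charFn x a * charFn x b := by
        intro a b
        simp only [charFn_apply, AddMonoidHom.add_apply, AddCircle.toCircle_add, Circle.coe_mul]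
      have hne : (charFn x) χ₀ ≠ 1 := by
        simp only [charFn_apply]
        intro h
        apply hχ₀
        have h' : AddCircle.toCircle (χ₀ x) = 1 := Circle.coe_inj.mp h
        have h0 : AddCircle.toCircle (χ₀ x) = AddCircle.toCircle (0 : 𝕋) := by
          rw [h', AddCircle.toCircle_zero]
        exact AddCircle.injective_toCircle one_ne_zero h0
      show ∫ χ, charFn x χ ∂(muB (X := X)) = ∫ y : K, charFn x ↑y ∂μK
      rw [integral_char_eq_zero (muB (X := X)) (charFn x) htchom χ₀ hne]
      rw [integral_char_eq_zero μK (fun y : K => charFn x ↑y)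
        (fun a b => htchom ↑a ↑b) ⟨χ₀, H.le_topologicalClosure hχ₀H⟩ hne]
    · push_neg at hx
      have hx0 : x = 0 := by
        by_contra h
        obtain ⟨χ, hχH, hχ⟩ := hsep x h
        exact hχ (hx χ hχH)
      subst hx0
      show ∫ χ, charFn (0 : X) χ ∂(muB (X := X)) = ∫ y : K, charFn (0 : X) ↑y ∂μK
      rw [charFn_zero]
      simp only [ContinuousMap.one_apply]
      rw [integral_const, integral_const]
      simp [measure_univ]
  have hspanP : Submodule.span ℂ (Set.range (charFn (X := X))) ≤ P :=
    Submodule.span_le.mpr hrange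
  -- key equality for all continuous functions
  have key : ∀ f : C(X →+ 𝕋, ℂ), ∫ χ, f χ ∂(muB (X := X)) = ∫ y : K, f ↑y ∂μK := by
    intro f
    have hf : f ∈ closure ((Submodule.span ℂ (Set.range (charFn (X := X)))) :
        Set C(X →+ 𝕋, ℂ)) := by
      have : f ∈ (Submodule.span ℂ (Set.range (charFn (X := X)))).topologicalClosure := by
        rw [span_char_closure_eq_top]; trivial
      exact this
    have hdiff : ∀ ε : ℝ, 0 < ε →
        ‖(∫ χ, f χ ∂(muB (X := X))) - ∫ y : K, f ↑y ∂μK‖ ≤ 2 * ε := by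
      intro ε hε
      obtain ⟨g, hgspan, hdist⟩ := Metric.mem_closure_iff.mp hf ε hε
      have hgP : ∫ χ, g χ ∂(muB (X := X)) = ∫ y : K, g ↑y ∂μK := hspanP hgspan
      have hbound : ∀ χ : X →+ 𝕋, ‖f χ - g χ‖ ≤ ε := by
        intro χ
        calc ‖f χ - g χ‖ = dist (f χ) (g χ) := (dist_eq_norm _ _).symm
          _ ≤ dist f g := ContinuousMap.dist_apply_le_dist χ
          _ ≤ ε := hdist.le
      have hB : ‖(∫ χ, f χ ∂(muB (X := X))) - ∫ χ, g χ ∂(muB (X := X))‖ ≤ ε := by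
        rw [← integral_sub (intB f) (intB g)]
        calc ‖∫ χ, (f χ - g χ) ∂(muB (X := X))‖
            ≤ ε * ((muB (X := X)) Set.univ).toReal :=
              norm_integral_le_of_norm_le_const (Eventually.of_forall hbound)
          _ = ε := by simp [measure_univ]
      have hKb : ‖(∫ y : K, f ↑y ∂μK) - ∫ y : K, g ↑y ∂μK‖ ≤ ε := by
        rw [← integral_sub (intK f) (intK g)]
        calc ‖∫ y : K, (f ↑y - g ↑y) ∂μK‖ ≤ ε * (μK Set.univ).toReal :=
              norm_integral_le_of_norm_le_const (Eventually.of_forall fun y => hbound ↑y)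
          _ = ε := by simp [measure_univ]
      calc ‖(∫ χ, f χ ∂(muB (X := X))) - ∫ y : K, f ↑y ∂μK‖
          = ‖((∫ χ, f χ ∂(muB (X := X))) - ∫ χ, g χ ∂(muB (X := X))) +
              ((∫ y : K, g ↑y ∂μK) - ∫ y : K, f ↑y ∂μK)‖ := by rw [hgP]; ring_nf
        _ ≤ ‖(∫ χ, f χ ∂(muB (X := X))) - ∫ χ, g χ ∂(muB (X := X))‖ +
              ‖(∫ y : K, g ↑y ∂μK) - ∫ y : K, f ↑y ∂μK‖ := norm_add_le _ _
        _ ≤ ε + ε := by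
            refine add_le_add hB ?_
            rw [norm_sub_rev]
            exact hKb
        _ = 2 * ε := by ring
    have : ‖(∫ χ, f χ ∂(muB (X := X))) - ∫ y : K, f ↑y ∂μK‖ ≤ 0 := by
      refine le_of_forall_pos_le_add ?_
      intro ε hε
      calc ‖(∫ χ, f χ ∂(muB (X := X))) - ∫ y : K, f ↑y ∂μK‖ ≤ 2 * (ε / 2) :=
            hdiff (ε / 2) (by linarith)
        _ = ε := by ring
        _ = 0 + ε := by ring
    have h0 := le_antisymm this (norm_nonneg _)
    rwa [norm_eq_zero, sub_eq_zero] at h0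
  -- now the density
  intro ψ
  by_contra hψ
  have hψK : ψ ∉ (K : Set (X →+ 𝕋)) := by rwa [hKcoe]
  obtain ⟨f, hf0, hf1, hf01⟩ := exists_continuous_zero_one_of_isClosed hKclosed
    isClosed_singleton (Set.disjoint_singleton_right.mpr hψK)
  set F : C(X →+ 𝕋, ℂ) := ⟨fun b => ((f b : ℝ) : ℂ),
    Complex.continuous_ofReal.comp f.continuous⟩ with hFdef
  have hFK : ∫ y : K, F ↑y ∂μK = 0 := by
    have hz : ∀ y : K, F ↑y = 0 := by
      intro y
      have : f ↑y = 0 := hf0 y.2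
      simp [hFdef, this]
    simp only [hz]
    exact integral_zero _ _
  have hFB : ∫ χ, F χ ∂(muB (X := X)) = ((∫ χ, f χ ∂(muB (X := X)) : ℝ) : ℂ) :=
    integral_ofReal
  have hnn : (0 : (X →+ 𝕋) → ℝ) ≤ ⇑f := fun χ => (hf01 χ).1
  have hintf : Integrable ⇑f (muB (X := X)) := hcs ⇑f f.continuous
  have hpos : 0 < ∫ χ, f χ ∂(muB (X := X)) := by
    rw [integral_pos_iff_support_of_nonneg hnn hintf]
    have hopen : IsOpen (Function.support ⇑f) := by
      have : Function.support ⇑f = ⇑f ⁻¹' ({0}ᶜ) := by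
        ext χ; simp [Function.mem_support]
      rw [this]
      exact (isOpen_compl_singleton).preimage f.continuous
    refine hopen.measure_pos _ ⟨ψ, ?_⟩
    simp [Function.mem_support, hf1 rfl]
  have hk := key F
  rw [hFB, hFK] at hk
  exact absurd (Complex.ofReal_eq_zero.mp hk) hpos.ne'

end Density

end Aux6

section Glue

open Filter Topology

variable {G : Type*} [AddCommGroup G] (τ : TopologicalSpace G)

lemma evalHom_mem_dual_coTop (g : G) : evalHom τ g ∈ dual (coTop τ) := by
  letI := coTop τ
  show Continuous (evalHom τ g)
  rw [continuous_def]
  intro U hU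
  have h : (evalHom τ g) ⁻¹' U =
      {χ : ↥(dual τ) | ∀ x ∈ ({g} : Set G), (χ : G →+ 𝕋) x ∈ U} := by
    ext χ
    simp [evalHom]
  rw [h]
  exact TopologicalSpace.isOpen_generateFrom_of_mem
    ⟨{g}, U, isCompact_singleton, hU, rfl⟩

lemma continuous_of_null {S : Set (ℕ → ↥(dual τ))} (hS : IsFinestFor S (coTop τ))
    (χ : ↥(dual τ) →+ 𝕋)
    (hχ : ∀ u ∈ S, Filter.Tendsto (fun n => χ (u n)) Filter.atTop (nhds (0 : 𝕋))) :
    χ ∈ dual (coTop τ) := by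
  obtain ⟨⟨hTG, hT2, hconv⟩, hmin⟩ := hS
  set τ1 := coTop τ with hτ1
  set τ2 : TopologicalSpace ↥(dual τ) := TopologicalSpace.induced χ inferInstance with hτ2
  have hTG2 : @IsTopologicalAddGroup ↥(dual τ) τ2 _ := topologicalAddGroup_induced χ
  have hTG'' : @IsTopologicalAddGroup ↥(dual τ) (τ1 ⊓ τ2) _ := topologicalAddGroup_inf hTG hTG2
  have hT2'' : @T2Space ↥(dual τ) (τ1 ⊓ τ2) :=
    t2Space_antitone (inf_le_left : τ1 ⊓ τ2 ≤ τ1) hT2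
  have hconv'' : ∀ u ∈ S, TendsToZero (τ1 ⊓ τ2) u := by
    intro u hu
    unfold TendsToZero
    rw [nhds_inf (t₁ := τ1) (t₂ := τ2)]
    refine Filter.tendsto_inf.mpr ⟨hconv u hu, ?_⟩
    rw [hτ2, nhds_induced, Filter.tendsto_comap_iff]
    have h0 : χ 0 = 0 := map_zero χ
    rw [h0]
    exact hχ u hu
  have hle : τ1 ≤ τ1 ⊓ τ2 := hmin (τ1 ⊓ τ2) ⟨hTG'', hT2'', hconv''⟩
  have hle2 : τ1 ≤ τ2 := hle.trans inf_le_right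
  show @Continuous _ _ τ1 _ χ
  exact continuous_iff_le_induced.mpr hle2

/-- evaluation at a point of `X`, as a character of `X →+ 𝕋` -/
def evalD {X : Type*} [AddCommGroup X] (x : X) : (X →+ 𝕋) →+ 𝕋 where
  toFun φ := φ x
  map_zero' := rfl
  map_add' _ _ := rfl

lemma continuous_evalD {X : Type*} [AddCommGroup X] (x : X) :
    @Continuous (X →+ 𝕋) 𝕋 (Xtop X) _ (evalD x) := by
  letI := Xtop X
  exact (continuous_apply x).comp continuous_induced_dom

end Glue

end AuxSection


/-- Corollary 1.11: Let `(G, τ)` be a MAP Abelian topological group such that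
the dual group `G^∧` (with the compact-open topology) is an `s`-group. Then `𝔟(G^∧∧)`, the image
of the bidual in the Bohr compactification `bG = ((G^∧)_d)^∧`, is a dense `g`-closed subgroup
of `bG`. -/
theorem statement_6 {G : Type*} [AddCommGroup G] (τ : TopologicalSpace G)
    (hg : @IsTopologicalAddGroup G τ _) (hMAP : IsMAP τ)
    (hs : ∃ S : Set (ℕ → ↥(dual τ)), IsFinestFor S (coTop τ)) :
    @Dense (↥(dual τ) →+ 𝕋) (Xtop ↥(dual τ)) (↑(dual (coTop τ))) ∧
    IsGClosed (Xtop ↥(dual τ)) (↑(dual (coTop τ))) := by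
  obtain ⟨S, hS⟩ := hs
  have hsep : ∀ x : ↥(dual τ), x ≠ 0 → ∃ χ ∈ dual (coTop τ), χ x ≠ 0 := by
    intro x hx
    have hx' : (x : G →+ 𝕋) ≠ 0 := by
      intro h
      exact hx (Subtype.coe_injective h)
    obtain ⟨g, hg'⟩ := DFunLike.ne_iff.mp hx'
    refine ⟨evalHom τ g, evalHom_mem_dual_coTop τ g, ?_⟩
    simpa [evalHom] using hg'
  constructor
  · exact Aux6.dense_of_separating (dual (coTop τ)) hsep
  · unfold IsGClosed gClosure
    apply subset_antisymm
    · intro ψ hψ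
      simp only [Set.mem_iInter, Set.mem_setOf_eq] at hψ
      show ψ ∈ dual (coTop τ)
      refine continuous_of_null τ hS ψ ?_
      intro u hu
      have hsub : (↑(dual (coTop τ)) : Set (↥(dual τ) →+ 𝕋)) ⊆ su (fun n => evalD (u n)) := by
        intro χ hχ
        have hχc : @Continuous _ _ (coTop τ) _ χ := hχ
        have hu0 : TendsToZero (coTop τ) u := hS.1.2.2 u hu
        have : Filter.Tendsto (fun n => χ (u n)) Filter.atTop (nhds (χ 0)) := by
          exact (@Continuous.tendsto _ _ (coTop τ) _ χ hχc 0).comp hu0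
        rw [map_zero] at this
        exact this
      have := hψ (fun n => evalD (u n)) ⟨fun n => continuous_evalD (u n), hsub⟩
      exact this
    · intro χ hχ
      simp only [Set.mem_iInter, Set.mem_setOf_eq]
      intro u hu
      exact hu.2 hχ
end

section
/- Every reflexive Polish Abelian group is g-closed in its Bohr compactification: if G is a Hausdorff Abelian topological group that is Polish (separable and completely metrizable) and reflexive (the evaluation map α : G → G^^ is a topological isomorphism; in particular G is MAP), then the image 𝔟(α(G)) of G in bG is a g-closed subgroup of bG. -/
open Filter Topology

/-- `(G, τ)` is a reflexive topological abelian group: the evaluation map into the bidual is a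
topological isomorphism. -/
def IsReflexive {G : Type*} [AddCommGroup G] (τ : TopologicalSpace G) : Prop :=
  ∃ e : G ≃+ ↥(dual (coTop τ)),
    (∀ g : G, ((e g : ↥(dual τ) →+ 𝕋)) = evalHom τ g) ∧
    @Continuous _ _ τ (coTop (coTop τ)) ⇑e ∧ @Continuous _ _ (coTop (coTop τ)) τ ⇑e.symm


namespace Statement7Aux

open Metric TopologicalSpace Filter Topology

instance : Fact ((0:ℝ) < 1) := ⟨one_pos⟩

lemma T_norm_coe {a : ℝ} (ha : |a| ≤ 1/2) : ‖(a : 𝕋)‖ = |a| :=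
  (AddCircle.norm_coe_eq_abs_iff (1:ℝ) one_ne_zero).2 (by simpa using ha)

lemma T_nsmul_coe (k : ℕ) (a : ℝ) : (k • ((a:ℝ) : 𝕋)) = (((k:ℝ) * a : ℝ) : 𝕋) := by
  rw [← nsmul_eq_mul]
  exact (map_nsmul (QuotientAddGroup.mk' (AddSubgroup.zmultiples (1:ℝ))) k a).symm

lemma T_coe_round (x : ℝ) : (QuotientAddGroup.mk x : 𝕋) = ((x - round x : ℝ) : 𝕋) := by
  have h0 : ((round x : ℝ) : 𝕋) = 0 := by
    rw [QuotientAddGroup.eq_zero_iff]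
    exact AddSubgroup.intCast_mem_zmultiples_one _
  rw [show ((x - round x : ℝ) : 𝕋) = ((x:ℝ):𝕋) - ((round x:ℝ):𝕋) from QuotientAddGroup.mk_sub _ x _]
  rw [h0, sub_zero]

lemma T_repr (t : 𝕋) : ∃ a : ℝ, ((a:ℝ) : 𝕋) = t ∧ |a| ≤ 1/2 ∧ ‖t‖ = |a| := by
  induction t using QuotientAddGroup.induction_on with
  | H x =>
    exact ⟨x - round x, (T_coe_round x).symm, abs_sub_round x,
      by rw [T_coe_round x, T_norm_coe (abs_sub_round x)]⟩

lemma T_small {n : ℕ} (hn : 1 ≤ n) {t : 𝕋} (h : ∀ k : ℕ, 1 ≤ k → k ≤ n → ‖k • t‖ ≤ 1/8) :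
    ‖t‖ ≤ 1/(4*n) := by
  obtain ⟨a, rfl, ha2, hnorm⟩ := T_repr t
  rw [hnorm]
  by_contra hlt
  push_neg at hlt
  have hnpos : (0:ℝ) < n := by exact_mod_cast hn
  have ha0 : 0 < |a| := lt_trans (by positivity) hlt
  have hlt' : 1 < |a| * (4*n) := (div_lt_iff₀ (by positivity)).mp hlt
  rcases le_or_gt |a| (1/8) with h8 | h8
  · have hn2 : 2 ≤ n := by
      by_contra hcon
      push_neg at hcon
      interval_cases n
      push_cast at hlt'
      linarith
    set x : ℝ := 1/(8*|a|) with hxdef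
    have hxpos : 0 < x := by positivity
    set k : ℕ := ⌊x⌋₊ + 1 with hkdef
    have hk1 : 1 ≤ k := Nat.le_add_left 1 _
    have hxk : x < (k:ℝ) := by exact_mod_cast Nat.lt_floor_add_one x
    have hkx : (k:ℝ) ≤ x + 1 := by
      have := Nat.floor_le hxpos.le
      rw [hkdef]
      push_cast
      linarith
    have hxa : x * |a| = 1/8 := by
      rw [hxdef]; field_simp
    have h1 : 1/8 < (k:ℝ) * |a| := by
      calc (1:ℝ)/8 = x * |a| := hxa.symm
      _ < k * |a| := mul_lt_mul_of_pos_right hxk ha0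
    have h2 : (k:ℝ) * |a| ≤ 1/4 := by
      calc (k:ℝ) * |a| ≤ (x+1) * |a| := mul_le_mul_of_nonneg_right hkx ha0.le
      _ = 1/8 + |a| := by rw [add_mul, one_mul, hxa]
      _ ≤ 1/4 := by linarith
    have hxn : x < (n:ℝ)/2 := by
      rw [hxdef, div_lt_div_iff₀ (by positivity) (by norm_num)]
      nlinarith
    have hkn : k ≤ n := by
      have h2n : (2:ℝ) ≤ n := by exact_mod_cast hn2
      have : (k:ℝ) ≤ n := by linarith
      exact_mod_cast this
    have := h k hk1 hkn
    rw [T_nsmul_coe, T_norm_coe (by rw [abs_mul, Nat.abs_cast]; linarith)] at this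
    rw [abs_mul, Nat.abs_cast] at this
    linarith
  · have := h 1 le_rfl hn
    rw [one_smul, hnorm] at this
    linarith

lemma T_zero {t : 𝕋} (h : ∀ k : ℕ, 1 ≤ k → ‖k • t‖ ≤ 1/8) : t = 0 := by
  have key : ∀ n : ℕ, 1 ≤ n → ‖t‖ ≤ 1/(4*n) := fun n hn => T_small hn (fun k h1 _ => h k h1)
  have hle : ‖t‖ ≤ 0 := by
    by_contra hcon
    push_neg at hcon
    obtain ⟨n, hng⟩ := exists_nat_gt (1/(4*‖t‖))
    have hn1 : 1 ≤ n := by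
      by_contra hc; push_neg at hc
      interval_cases n
      have hp : 0 < 1/(4*‖t‖) := by positivity
      push_cast at hng
      linarith
    have hk := key n hn1
    have hnpos : (0:ℝ) < n := by exact_mod_cast hn1
    have h1 : 1 < (n:ℝ) * (4*‖t‖) := (div_lt_iff₀ (by positivity)).mp hng
    have h2 : ‖t‖ * (4*n) ≤ 1 := (le_div_iff₀ (by positivity)).mp hk
    nlinarith
  exact norm_le_zero_iff.mp hle


/-- The closed arc of radius `1/8` around `0` in `𝕋`. -/
noncomputable def S8 : Set 𝕋 := Metric.closedBall 0 (1/8)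

lemma S8_closed : IsClosed S8 := Metric.isClosed_closedBall

lemma S8_mem_nhds : S8 ∈ 𝓝 (0:𝕋) := Metric.closedBall_mem_nhds 0 (by norm_num)

lemma norm_le_of_mem_S8 {t : 𝕋} (h : t ∈ S8) : ‖t‖ ≤ 1/8 := by
  simpa [S8, Metric.mem_closedBall, dist_zero_right] using h

/-- The "polar-like" set of all (not necessarily continuous) homomorphisms mapping `V` to `S8`. -/
def KK {G : Type*} [AddCommGroup G] (V : Set G) : Set (G → 𝕋) :=
  {f | (∀ x y, f (x+y) = f x + f y) ∧ ∀ x ∈ V, f x ∈ S8}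

lemma KK_mono {G : Type*} [AddCommGroup G] {V W : Set G} (h : W ⊆ V) : KK V ⊆ KK W :=
  fun _ hf => ⟨hf.1, fun x hx => hf.2 x (h hx)⟩

/-- A pointwise additive function into a group is an `AddMonoidHom`. -/
noncomputable def homOf {G : Type*} [AddCommGroup G] (f : G → 𝕋)
    (hf : ∀ x y, f (x+y) = f x + f y) : G →+ 𝕋 :=
  AddMonoidHom.mk' f hf

lemma homOf_coe {G : Type*} [AddCommGroup G] (f : G → 𝕋)
    (hf : ∀ x y, f (x+y) = f x + f y) : ⇑(homOf f hf) = f := rfl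

lemma KK_compact {G : Type*} [AddCommGroup G] (V : Set G) : IsCompact (KK V) := by
  have h1 : KK V =
      (⋂ (x : G), ⋂ (y : G), {f : G → 𝕋 | f (x+y) = f x + f y}) ∩
        ⋂ x ∈ V, {f : G → 𝕋 | f x ∈ S8} := by
    ext f
    simp only [KK, Set.mem_setOf_eq, Set.mem_inter_iff, Set.mem_iInter]
  rw [h1]
  apply IsClosed.isCompact
  apply IsClosed.inter
  · exact isClosed_iInter fun x => isClosed_iInter fun y =>
      isClosed_eq (continuous_apply (x+y)) ((continuous_apply x).add (continuous_apply y))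
  · exact isClosed_biInter fun x _ => S8_closed.preimage (continuous_apply x)

lemma KK_continuous {G : Type*} [AddCommGroup G] [tG : TopologicalSpace G]
    [IsTopologicalAddGroup G] {V : Set G} (hV : V ∈ 𝓝 (0:G)) {f : G → 𝕋}
    (hf : f ∈ KK V) : Continuous f := by
  have hc0 : ContinuousAt (homOf f hf.1) 0 := by
    rw [ContinuousAt, map_zero, Metric.tendsto_nhds]
    intro ε hε
    obtain ⟨n0, hn0⟩ := exists_nat_gt (1/(4*ε))
    set n : ℕ := n0 + 1 with hn
    have hn1 : 1 ≤ n := Nat.le_add_left 1 _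
    have hnpos : (0:ℝ) < n := by positivity
    have hnε : 1/(4*(n:ℝ)) < ε := by
      rw [div_lt_iff₀ (by positivity)]
      have h1 : 1/(4*ε) < (n:ℝ) := lt_of_lt_of_le hn0 (by rw [hn]; push_cast; linarith)
      rw [div_lt_iff₀ (by positivity)] at h1
      nlinarith
    have hW : ∀ᶠ x in 𝓝 (0:G), ∀ k ∈ Finset.Icc 1 n, k • x ∈ V := by
      rw [Filter.eventually_all_finset]
      intro k _
      have hsk : Continuous fun x : G => k • x := continuous_nsmul k
      exact hsk.continuousAt.preimage_mem_nhds (by rw [smul_zero]; exact hV)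
    filter_upwards [hW] with x hx
    rw [dist_zero_right]
    have hsmall : ∀ k : ℕ, 1 ≤ k → k ≤ n → ‖k • f x‖ ≤ 1/8 := by
      intro k h1 h2
      have hmap : f (k • x) = k • f x := by
        have := map_nsmul (homOf f hf.1) k x
        simpa [homOf_coe] using this
      rw [← hmap]
      exact norm_le_of_mem_S8 (hf.2 _ (hx k (Finset.mem_Icc.mpr ⟨h1, h2⟩)))
    calc ‖(homOf f hf.1) x‖ = ‖f x‖ := by rw [homOf_coe]
      _ ≤ 1/(4*(n:ℝ)) := T_small hn1 hsmall
      _ < ε := hnε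
  have := continuous_of_continuousAt_zero (homOf f hf.1) hc0
  rwa [homOf_coe] at this

end Statement7Aux

open Statement7Aux in
/-- The main analytic step: a character of the dual group which is sequentially continuous
with respect to pointwise-null sequences is continuous for the compact-open topology. -/
theorem statement7_key {G : Type*} [AddCommGroup G] [tG : TopologicalSpace G]
    [IsTopologicalAddGroup G] [PolishSpace G] (φ : ↥(dual tG) →+ 𝕋)
    (hφ : ∀ χ : ℕ → ↥(dual tG),
      (∀ g : G, Filter.Tendsto (fun n => (χ n : G →+ 𝕋) g) Filter.atTop (𝓝 0)) →
      Filter.Tendsto (fun n => φ (χ n)) Filter.atTop (𝓝 0)) :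
    @Continuous _ _ (coTop tG) _ φ := by
  classical
  open Metric TopologicalSpace Filter Topology in
  -- the inclusion of the dual group into the function space
  set ι : ↥(dual tG) → (G → 𝕋) := fun χ => ⇑(χ : G →+ 𝕋) with hιdef
  have hι_inj : Function.Injective ι := by
    intro a b hab
    exact Subtype.ext (DFunLike.coe_injective hab)
  -- the auxiliary evaluation of φ on functions
  set Φ : (G → 𝕋) → 𝕋 := fun f => if h : ∃ χ : ↥(dual tG), ι χ = f then φ h.choose else 0
    with hΦdef
  have hΦι : ∀ χ : ↥(dual tG), Φ (ι χ) = φ χ := by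
    intro χ
    have h : ∃ χ' : ↥(dual tG), ι χ' = ι χ := ⟨χ, rfl⟩
    have : h.choose = χ := hι_inj h.choose_spec
    simp only [hΦdef, dif_pos h, this]
  -- a countable antitone basis of neighborhoods of 0 in G
  obtain ⟨V, hV⟩ := (𝓝 (0:G)).exists_antitone_basis
  have hVmem : ∀ m, V m ∈ 𝓝 (0:G) := fun m => hV.1.mem_of_mem trivial
  -- the polars
  set 𝒦 : ℕ → Set (G → 𝕋) := fun m => KK (V m) with h𝒦def
  have h𝒦mono : ∀ m, 𝒦 m ⊆ 𝒦 (m+1) := fun m => KK_mono (hV.2 (Nat.le_succ m))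
  have h𝒦cont : ∀ m, ∀ f ∈ 𝒦 m, Continuous f := fun m f hf => KK_continuous (hVmem m) hf
  -- the map from a polar into the dual group
  set toD : ∀ m, ↥(𝒦 m) → ↥(dual tG) := fun m f =>
    ⟨homOf f.1 f.2.1, show Continuous ⇑(homOf f.1 f.2.1) from by
      rw [homOf_coe]; exact h𝒦cont m f.1 f.2⟩ with htoDdef
  have hιtoD : ∀ m (f : ↥(𝒦 m)), ι (toD m f) = f.1 := fun m f => rfl
  -- covering of the dual group by the polars
  have hcover : ∀ χ : ↥(dual tG), ∃ m, ι χ ∈ 𝒦 m := by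
    intro χ
    have hc : Continuous (ι χ) := χ.2
    have h0 : (ι χ) 0 = 0 := map_zero (χ : G →+ 𝕋)
    have hpre : (ι χ) ⁻¹' S8 ∈ 𝓝 (0:G) :=
      hc.continuousAt.preimage_mem_nhds (by rw [h0]; exact S8_mem_nhds)
    obtain ⟨m, -, hm⟩ := hV.1.mem_iff.mp hpre
    exact ⟨m, ⟨fun x y => map_add (χ : G →+ 𝕋) x y, fun x hx => hm hx⟩⟩
  -- the key quantitative statement
  have main : ∀ ε : ℝ, 0 < ε → ∃ K : Set G, IsCompact K ∧
      ∀ χ : ↥(dual tG), (∀ x ∈ K, (χ : G →+ 𝕋) x ∈ S8) → ‖φ χ‖ < ε := by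
    intro ε hε
    set A : Set (G → 𝕋) := {f | ε ≤ ‖Φ f‖} with hAdef
    -- φ is continuous on each polar, hence the "bad" set meets each polar in a compact set
    have hAK : ∀ m, IsCompact (𝒦 m ∩ A) := by
      intro m
      haveI : CompactSpace ↥(𝒦 m) := isCompact_iff_compactSpace.mp (KK_compact (V m))
      -- metrizability of the polar via a dense sequence
      have hne : Nonempty G := ⟨0⟩
      set d : ℕ → G := TopologicalSpace.denseSeq G with hddef
      set r : ↥(𝒦 m) → (ℕ → 𝕋) := fun f => fun n => f.1 (d n) with hrdef
      have hr_cont : Continuous r :=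
        continuous_pi fun n => (continuous_apply (d n)).comp continuous_subtype_val
      have hr_inj : Function.Injective r := by
        intro a b hab
        apply Subtype.ext
        apply (TopologicalSpace.denseRange_denseSeq G).equalizer
          (h𝒦cont m a.1 a.2) (h𝒦cont m b.1 b.2)
        funext n
        exact congrFun hab n
      have hemb := hr_cont.isClosedEmbedding hr_inj
      haveI : TopologicalSpace.MetrizableSpace ↥(𝒦 m) := hemb.toIsEmbedding.metrizableSpace
      -- φ is sequentially continuous on the polar
      have hseq : SeqContinuous (fun f : ↥(𝒦 m) => Φ f.1) := by
        intro fj f hconv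
        set χ : ℕ → ↥(dual tG) := fun j => toD m (fj j) - toD m f with hχdef
        have hnull : ∀ g : G, Tendsto (fun j => (χ j : G →+ 𝕋) g) atTop (𝓝 0) := by
          intro g
          have hconvg : Tendsto (fun j => (fj j).1 g) atTop (𝓝 (f.1 g)) :=
            (Continuous.tendsto ((continuous_apply g).comp continuous_subtype_val) f).comp hconv
          have hval : ∀ j, (χ j : G →+ 𝕋) g = (fj j).1 g - f.1 g := by
            intro j
            simp only [hχdef, AddSubgroup.coe_sub, AddMonoidHom.sub_apply]
            rfl
          simp only [hval]
          exact tendsto_sub_nhds_zero_iff.mpr hconvg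
        have := hφ χ hnull
        have hval2 : ∀ j, φ (χ j) = Φ ((fj j).1) - Φ f.1 := by
          intro j
          simp only [hχdef, map_sub, hΦι, hιtoD]
          rw [← hΦι (toD m (fj j)), ← hΦι (toD m f), hιtoD, hιtoD]
        simp only [hval2] at this
        exact tendsto_sub_nhds_zero_iff.mp this
      have hφm_cont : Continuous (fun f : ↥(𝒦 m) => Φ f.1) := hseq.continuous
      have hCclosed : IsClosed {t : 𝕋 | ε ≤ ‖t‖} := isClosed_le continuous_const continuous_norm
      have himg : 𝒦 m ∩ A =
          Subtype.val '' ((fun f : ↥(𝒦 m) => Φ f.1) ⁻¹' {t : 𝕋 | ε ≤ ‖t‖}) := by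
        rw [show ((fun f : ↥(𝒦 m) => Φ f.1) ⁻¹' {t : 𝕋 | ε ≤ ‖t‖}) =
            (Subtype.val : ↥(𝒦 m) → (G → 𝕋)) ⁻¹' A from rfl]
        rw [Subtype.image_preimage_coe]
      rw [himg]
      exact ((hCclosed.preimage hφm_cont).isCompact).image continuous_subtype_val
    -- the sets P T
    set P : Set G → Set (G → 𝕋) := fun T => {f | ∀ x ∈ T, f x ∈ S8} with hPdef
    have hPclosed : ∀ T : Set G, IsClosed (P T) := by
      intro T
      have : P T = ⋂ x ∈ T, {f : G → 𝕋 | f x ∈ S8} := by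
        ext f; simp [hPdef]
      rw [this]
      exact isClosed_biInter fun x _ => S8_closed.preimage (continuous_apply x)
    have hPmono : ∀ {T T' : Set G}, T ⊆ T' → P T' ⊆ P T :=
      fun h f hf x hx => hf x (h hx)
    -- the inductive step
    have gstep : ∀ (m : ℕ) (T : Finset G) (Wn : Set G),
        (∀ f ∈ 𝒦 (m+1) ∩ A ∩ P ↑T, (∀ x ∈ Wn, f x ∈ S8) → False) →
        ∃ F : Finset G, ↑F ⊆ Wn ∧ 𝒦 (m+1) ∩ A ∩ P (↑T ∪ ↑F) = ∅ := by
      intro m T Wn hW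
      have hs : IsCompact ((𝒦 (m+1) ∩ A) ∩ P ↑T) := (hAK (m+1)).inter_right (hPclosed _)
      set Z : ↥Wn → Set (G → 𝕋) := fun x => {f | f x.1 ∈ S8} with hZdef
      have hZclosed : ∀ x : ↥Wn, IsClosed (Z x) :=
        fun x => S8_closed.preimage (continuous_apply x.1)
      by_cases hemp : ((𝒦 (m+1) ∩ A) ∩ P ↑T) ∩ ⋂ x : ↥Wn, Z x = ∅
      · obtain ⟨u, hu⟩ := hs.elim_finite_subfamily_closed Z hZclosed hemp
        refine ⟨u.image (fun x => x.1), ?_, ?_⟩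
        · intro x hx
          simp only [Finset.coe_image, Set.mem_image, Finset.mem_coe] at hx
          obtain ⟨y, -, rfl⟩ := hx
          exact y.2
        · rw [Set.eq_empty_iff_forall_notMem]
          rintro f ⟨⟨hf1, hf2⟩, hf3⟩
          have hfs : f ∈ (𝒦 (m+1) ∩ A) ∩ P ↑T :=
            ⟨⟨hf1, hf2⟩, fun x hx => hf3 x (Set.mem_union_left _ hx)⟩
          have hfZ : f ∈ ⋂ x ∈ u, Z x := by
            apply Set.mem_iInter₂.mpr
            intro x hx
            exact hf3 x.1 (Set.mem_union_right _ (by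
              simp only [Finset.coe_image, Set.mem_image, Finset.mem_coe]
              exact ⟨x, hx, rfl⟩))
          rw [Set.eq_empty_iff_forall_notMem] at hu
          exact hu f ⟨hfs, hfZ⟩
      · rw [Set.eq_empty_iff_forall_notMem] at hemp
        push_neg at hemp
        obtain ⟨f, hfs, hfZ⟩ := hemp
        rw [Set.mem_iInter] at hfZ
        exact absurd (hW f ⟨hfs.1, hfs.2⟩ fun x hx => hfZ ⟨x, hx⟩) not_false
    -- the base case
    have base : ∃ F0 : Finset G, 𝒦 1 ∩ A ∩ P ↑F0 = ∅ := by
      obtain ⟨F, -, hF⟩ := gstep 0 ∅ Set.univ (by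
        rintro f ⟨⟨hf1, hf2⟩, -⟩ hall
        -- f maps everything into S8, hence f = 0
        have hzero : ∀ x : G, f x = 0 := by
          intro x
          apply T_zero
          intro k hk
          have hmap : f (k • x) = k • f x := by
            have := map_nsmul (homOf f hf1.1) k x
            simpa [homOf_coe] using this
          rw [← hmap]
          exact norm_le_of_mem_S8 (hall _ (Set.mem_univ _))
        have hfeq : f = ι (0 : ↥(dual tG)) := by
          funext x
          rw [hzero x]
          simp [hιdef]
        have : ε ≤ ‖Φ f‖ := hf2
        rw [hfeq, hΦι, map_zero, norm_zero] at this
        linarith)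
      refine ⟨F, ?_⟩
      rw [← hF]
      congr 1
      rw [Finset.coe_empty, Set.empty_union]
    obtain ⟨F0, hF0⟩ := base
    -- the recursion
    have hrec : ∀ (m : ℕ) (T : Finset G), (𝒦 (m+1) ∩ A ∩ P ↑T = ∅) →
        ∃ T' : Finset G, ((↑T' : Set G) ⊆ ↑T ∪ V (m+1)) ∧ ((↑T : Set G) ⊆ ↑T') ∧
          (𝒦 (m+2) ∩ A ∩ P ↑T' = ∅) := by
      intro m T hT
      obtain ⟨F, hFsub, hF⟩ := gstep (m+1) T (V (m+1)) (by
        rintro f ⟨⟨hf1, hf2⟩, hf3⟩ hall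
        have hfK : f ∈ 𝒦 (m+1) := ⟨hf1.1, fun x hx => hall x hx⟩
        rw [Set.eq_empty_iff_forall_notMem] at hT
        exact hT f ⟨⟨hfK, hf2⟩, hf3⟩)
      refine ⟨T ∪ F, ?_, ?_, ?_⟩
      · rw [Finset.coe_union]
        exact Set.union_subset_union_right _ hFsub
      · rw [Finset.coe_union]; exact Set.subset_union_left
      · rw [Finset.coe_union]; exact hF
    choose T' hT'1 hT'2 hT'3 using hrec
    set g : ∀ m : ℕ, {T : Finset G // 𝒦 (m+1) ∩ A ∩ P ↑T = ∅} := fun m =>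
      Nat.rec ⟨F0, hF0⟩ (fun m ih => ⟨T' m ih.1 ih.2, hT'3 m ih.1 ih.2⟩) m with hgdef
    have hgsucc : ∀ m, (g (m+1)).1 = T' m (g m).1 (g m).2 := fun m => rfl
    have hgmono : ∀ m, ((g m).1 : Set G) ⊆ ((g (m+1)).1 : Set G) := by
      intro m
      rw [hgsucc m]
      exact hT'2 m (g m).1 (g m).2
    have hgincl : ∀ m, ((g (m+1)).1 : Set G) ⊆ ((g m).1 : Set G) ∪ V (m+1) := by
      intro m
      rw [hgsucc m]
      exact hT'1 m (g m).1 (g m).2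
    have hgmono' : ∀ m m', m ≤ m' → ((g m).1 : Set G) ⊆ ((g m').1 : Set G) := by
      intro m m' h
      induction m' with
      | zero => rw [Nat.le_zero] at h; rw [h]
      | succ k ih =>
        rcases Nat.lt_or_ge m (k+1) with h'|h'
        · exact (ih (Nat.lt_succ_iff.mp h')).trans (hgmono k)
        · rw [Nat.le_antisymm h h']
    have hbound : ∀ M m : ℕ, ((g m).1 : Set G) ⊆ ((g M).1 : Set G) ∪ V (M+1) := by
      intro M m
      induction m with
      | zero => exact (hgmono' 0 M (Nat.zero_le M)).trans Set.subset_union_left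
      | succ k ih =>
        rcases Nat.lt_or_ge k M with h'|h'
        · exact (hgmono' (k+1) M h').trans Set.subset_union_left
        · refine (hgincl k).trans ?_
          apply Set.union_subset
          · exact ih
          · exact (hV.2 (Nat.succ_le_succ h')).trans Set.subset_union_right
    set K : Set G := {0} ∪ ⋃ m, ((g m).1 : Set G) with hKdef
    have hKcpt : IsCompact K := by
      rw [isCompact_iff_ultrafilter_le_nhds]
      intro F hF
      rw [Filter.le_principal_iff] at hF
      by_cases hfin : ∃ M, ((g M).1 : Set G) ∈ F
      · obtain ⟨M, hM⟩ := hfin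
        obtain ⟨x, hx, hpure⟩ := Ultrafilter.eq_pure_of_finite_mem ((g M).1.finite_toSet) hM
        refine ⟨x, Set.mem_union_right _ (Set.mem_iUnion.mpr ⟨M, hx⟩), ?_⟩
        rw [hpure]
        exact pure_le_nhds x
      · push_neg at hfin
        refine ⟨0, Set.mem_union_left _ rfl, ?_⟩
        intro U hU
        obtain ⟨M, -, hM⟩ := hV.1.mem_iff.mp hU
        have hsub : K ⊆ ((g M).1 : Set G) ∪ U := by
          intro x hx
          rcases hx with hx|hx
          · exact Or.inr (hx ▸ mem_of_mem_nhds hU)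
          · obtain ⟨m, hm⟩ := Set.mem_iUnion.mp hx
            rcases hbound M m hm with h|h
            · exact Or.inl h
            · exact Or.inr (hM (hV.2 (Nat.le_succ M) h))
        have hcompl : (((g M).1 : Set G))ᶜ ∈ F :=
          Ultrafilter.compl_mem_iff_notMem.mpr (hfin M)
        have hKc : K ∩ (((g M).1 : Set G))ᶜ ∈ F := Filter.inter_mem hF hcompl
        refine Filter.mem_of_superset hKc ?_
        rintro x ⟨hx1, hx2⟩
        rcases hsub hx1 with h|h
        · exact absurd h hx2
        · exact h
    refine ⟨K, hKcpt, ?_⟩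
    intro χ hχ
    by_contra hcon
    push_neg at hcon
    obtain ⟨m, hm⟩ := hcover χ
    have hA : ι χ ∈ A := by
      rw [hAdef]
      show ε ≤ ‖Φ (ι χ)‖
      rw [hΦι]
      exact hcon
    have hP : ι χ ∈ P ((g m).1 : Set G) := by
      intro x hx
      exact hχ x (Set.mem_union_right _ (Set.mem_iUnion.mpr ⟨m, hx⟩))
    have := (g m).2
    rw [Set.eq_empty_iff_forall_notMem] at this
    exact this (ι χ) ⟨⟨h𝒦mono m hm, hA⟩, hP⟩
  -- Now conclude continuity for the compact-open topology.
  letI tD : TopologicalSpace ↥(dual tG) := coTop tG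
  set jhom : ↥(dual tG) →+ C(G, 𝕋) :=
    { toFun := fun χ => ⟨⇑(χ : G →+ 𝕋), χ.2⟩
      map_zero' := by ext g; rfl
      map_add' := fun a b => by ext g; rfl } with hjdef
  have hcoe : tD = TopologicalSpace.induced (⇑jhom) ContinuousMap.compactOpen := by
    rw [ContinuousMap.compactOpen_eq, induced_generateFrom_eq]
    show TopologicalSpace.generateFrom _ = TopologicalSpace.generateFrom _
    congr 1
    ext T
    constructor
    · rintro ⟨K, U, hK, hU, rfl⟩
      exact ⟨{f : C(G, 𝕋) | Set.MapsTo f K U}, Set.mem_image2_of_mem hK hU, rfl⟩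
    · rintro ⟨s, hs, rfl⟩
      obtain ⟨K, hK, U, hU, rfl⟩ := hs
      exact ⟨K, U, hK, hU, rfl⟩
  have hind : Topology.IsInducing (⇑jhom) := ⟨hcoe⟩
  haveI : IsTopologicalAddGroup ↥(dual tG) := hind.topologicalAddGroup jhom
  apply continuous_of_continuousAt_zero φ
  rw [ContinuousAt, map_zero, Metric.tendsto_nhds]
  intro ε hε
  obtain ⟨K, hKcpt, hK⟩ := main ε hε
  set O : Set ↥(dual tG) := {χ | ∀ x ∈ K, (χ : G →+ 𝕋) x ∈ Metric.ball (0:𝕋) (1/8)}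
    with hOdef
  have hO_open : IsOpen O :=
    TopologicalSpace.isOpen_generateFrom_of_mem
      ⟨K, Metric.ball (0:𝕋) (1/8), hKcpt, Metric.isOpen_ball, rfl⟩
  have h0O : (0 : ↥(dual tG)) ∈ O := by
    intro x _
    show ((0 : ↥(dual tG)) : G →+ 𝕋) x ∈ _
    rw [AddSubgroup.coe_zero, AddMonoidHom.zero_apply]
    exact Metric.mem_ball_self (by norm_num)
  filter_upwards [hO_open.mem_nhds h0O] with χ hχ
  rw [dist_zero_right]
  exact hK χ fun x hx => Metric.ball_subset_closedBall (hχ x hx)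

/-- Proposition 1.12: Every reflexive Polish Abelian group is `g`-closed in
its Bohr compactification: the image `𝔟(α(G))` of `G` in `bG = ((G^∧)_d)^∧` (i.e. the set of
evaluation characters) is a `g`-closed subgroup of `bG`. -/
theorem statement_7 {G : Type*} [AddCommGroup G] [tG : TopologicalSpace G]
    [IsTopologicalAddGroup G] [PolishSpace G] (hrefl : IsReflexive tG) :
    IsGClosed (Xtop ↥(dual tG)) (Set.range (evalHom tG)) := by
  classical
  obtain ⟨e, he, -, -⟩ := hrefl
  unfold IsGClosed
  apply subset_antisymm
  · intro φ hφmem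
    have hφ : ∀ χ : ℕ → ↥(dual tG),
        (∀ g : G, Filter.Tendsto (fun n => (χ n : G →+ 𝕋) g) Filter.atTop (𝓝 0)) →
        Filter.Tendsto (fun n => φ (χ n)) Filter.atTop (𝓝 0) := by
      intro χ hχ
      set u : ℕ → ((↥(dual tG) →+ 𝕋) →+ 𝕋) := fun n =>
        AddMonoidHom.mk' (fun ψ => ψ (χ n)) (fun a b => rfl) with hudef
      have hu_cont : ∀ n, @Continuous _ _ (Xtop ↥(dual tG)) _ (u n) := by
        intro n
        letI := Xtop ↥(dual tG)
        exact (continuous_apply (χ n)).comp continuous_induced_dom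
      have hu_sub : Set.range (evalHom tG) ⊆ su u := by
        rintro ψ ⟨g, rfl⟩
        exact hχ g
      exact Set.mem_iInter₂.mp hφmem u ⟨hu_cont, hu_sub⟩
    have hcont := statement7_key φ hφ
    have hmem : φ ∈ dual (coTop tG) := hcont
    refine ⟨e.symm ⟨φ, hmem⟩, ?_⟩
    have h1 := he (e.symm ⟨φ, hmem⟩)
    rw [e.apply_symm_apply] at h1
    exact h1.symm
  · intro x hx
    apply Set.mem_iInter₂.mpr
    intro u hu
    exact hu.2 hx
end

section
/- Let (X, τ) be a non-discrete Hausdorff Abelian topological group. The following are equivalent: (i) (X, τ) is an s-group; (ii) there exist a non-empty index set I and a quotient homomorphism p from the s-sum s-∑_{i∈I} G_i of a family of copies G_i = (ℤ_0^ℕ, e) onto (X, τ). Moreover, in (ii) the quotient map p may be chosen to be sequence-covering. -/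
open Filter Topology

/-- `ℤ_0^ℕ`, the direct sum of countably many copies of `ℤ`. -/
abbrev Z0N : Type := ℕ →₀ ℤ

/-- The sequence `e = (e_n)` of standard generators of `ℤ_0^ℕ`. -/
noncomputable def eSeq : ℕ → Z0N := fun n => Finsupp.single n (1 : ℤ)

universe u

/-- The defining family of null sequences of the `s`-sum of copies of `(ℤ_0^ℕ, 𝐞)` indexed
by `I`: all sequences `(j_i(g_n))_n` where `i ∈ I` and `(g_n) → 0` in `(ℤ_0^ℕ, τ_𝐞)`. The
`s`-sum is `⨁_{i ∈ I} ℤ_0^ℕ` with the finest Hausdorff group topology in which all these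
sequences converge to `0`. -/
def SSum (τe : TopologicalSpace Z0N) (I : Type u) : Set (ℕ → (I →₀ Z0N)) :=
  {v | ∃ (i : I) (g : ℕ → Z0N), TendsToZero τe g ∧ v = fun n => Finsupp.single i (g n)}


section AuxiliaryLemmas

open TopologicalSpace

variable {G : Type*} [AddCommGroup G]

lemma tendsToZero_mono {τ₁ τ₂ : TopologicalSpace G} (h : τ₁ ≤ τ₂) {u : ℕ → G}
    (hu : TendsToZero τ₁ u) : TendsToZero τ₂ u :=
  hu.mono_right (nhds_mono h)

lemma tendsToZero_inf {τ₁ τ₂ : TopologicalSpace G} {u : ℕ → G}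
    (h1 : TendsToZero τ₁ u) (h2 : TendsToZero τ₂ u) : TendsToZero (τ₁ ⊓ τ₂) u := by
  unfold TendsToZero at *
  rw [@nhds_inf G τ₁ τ₂ 0]
  exact Filter.tendsto_inf.mpr ⟨h1, h2⟩

lemma finest_le {S : Set (ℕ → G)} {τ₁ τ₂ : TopologicalSpace G}
    (h : IsFinestFor S τ₁) (hg2 : @IsTopologicalAddGroup G τ₂ _)
    (hconv : ∀ u ∈ S, TendsToZero τ₂ u) : τ₁ ≤ τ₂ := by
  have hσ : IsTopFor S (τ₁ ⊓ τ₂) :=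
    ⟨topologicalAddGroup_inf h.1.1 hg2, t2Space_antitone inf_le_left h.1.2.1,
      fun u hu => tendsToZero_inf (h.1.2.2 u hu) (hconv u hu)⟩
  exact le_trans (h.2 _ hσ) inf_le_right

lemma exists_finest {S : Set (ℕ → G)} (h : IsTSSet S) : ∃ τ, IsFinestFor S τ := by
  obtain ⟨τ0, hτ0⟩ := h
  refine ⟨sInf {τ' | IsTopFor S τ'}, ⟨⟨topologicalAddGroup_sInf fun t ht => ht.1,
    t2Space_antitone (sInf_le (show τ0 ∈ {τ' | IsTopFor S τ'} from hτ0)) hτ0.2.1, fun u hu => ?_⟩, fun τ' h' => sInf_le h'⟩⟩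
  unfold TendsToZero
  rw [@nhds_sInf G _ 0]
  exact Filter.tendsto_iInf.mpr fun t => Filter.tendsto_iInf.mpr fun ht => ht.2.2 u hu

lemma topologicalAddGroup_coinduced_of_surjective {G' X' : Type*} [AddCommGroup G']
    [AddCommGroup X'] (τs : TopologicalSpace G') (hG : @IsTopologicalAddGroup G' τs _)
    (p : G' →+ X') (hs : Function.Surjective p) :
    @IsTopologicalAddGroup X' (τs.coinduced p) _ := by
  letI := τs
  haveI := hG
  let e := QuotientAddGroup.quotientKerEquivOfSurjective p hs
  have hp : ⇑p = ⇑e ∘ (QuotientAddGroup.mk : G' → G' ⧸ p.ker) := by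
    funext g; rfl
  have h1 : τs.coinduced p =
      TopologicalSpace.coinduced (⇑e) (QuotientAddGroup.instTopologicalSpace p.ker) := by
    rw [hp, ← coinduced_compose]
    congr 1
  have h2 : TopologicalSpace.coinduced (⇑e) (QuotientAddGroup.instTopologicalSpace p.ker) =
      TopologicalSpace.induced (⇑e.symm) (QuotientAddGroup.instTopologicalSpace p.ker) := by
    exact (congrFun (Equiv.induced_symm e.toEquiv) _).symm
  rw [h1, h2]
  exact topologicalAddGroup_induced (e.symm : X' ≃+ (G' ⧸ p.ker))

/-- The homomorphism `ℤ₀^ℕ →+ X` sending `e_n` to `u n`. -/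
noncomputable def qmap {X' : Type*} [AddCommGroup X'] (u : ℕ → X') : Z0N →+ X' :=
  Finsupp.liftAddHom fun n => zmultiplesHom X' (u n)

lemma qmap_single {X' : Type*} [AddCommGroup X'] (u : ℕ → X') (n : ℕ) (k : ℤ) :
    qmap u (Finsupp.single n k) = k • u n :=
  Finsupp.liftAddHom_apply_single _ _ _

lemma tendsToZero_induced_iff {G' X' : Type*} [AddCommGroup G'] [AddCommGroup X']
    (τ : TopologicalSpace X') (f : G' →+ X') {g : ℕ → G'} :
    TendsToZero (TopologicalSpace.induced f τ) g ↔ TendsToZero τ (fun n => f (g n)) := by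
  letI := τ
  unfold TendsToZero
  rw [nhds_induced (⇑f) (0 : G'), map_zero]
  exact Filter.tendsto_comap_iff

lemma qmap_tendsto {X' : Type*} [AddCommGroup X'] (τ : TopologicalSpace X')
    (hg : @IsTopologicalAddGroup X' τ _) (τe : TopologicalSpace Z0N)
    (hτe : IsFinestFor {eSeq} τe) {u : ℕ → X'} (hu : TendsToZero τ u) {g : ℕ → Z0N}
    (hgnull : TendsToZero τe g) : TendsToZero τ (fun n => qmap u (g n)) := by
  have hle : τe ≤ TopologicalSpace.induced (qmap u) τ := by
    apply finest_le hτe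
    · letI := τ; haveI := hg; exact topologicalAddGroup_induced (qmap u)
    · intro v hv
      rcases hv with rfl
      rw [tendsToZero_induced_iff]
      have he : (fun n => qmap u (eSeq n)) = u := by
        funext n
        rw [show eSeq n = Finsupp.single n (1 : ℤ) from rfl, qmap_single, one_smul]
      rw [he]
      exact hu
  exact (tendsToZero_induced_iff τ (qmap u)).mp (tendsToZero_mono hle hgnull)

end AuxiliaryLemmas

/-- Theorem 1.16: A non-discrete Hausdorff Abelian topological group `(X, τ)`
is an `s`-group iff it is a (topological) quotient group of the `s`-sum of a non-empty family
of copies of `(ℤ_0^ℕ, 𝐞)`; moreover the quotient map may be chosen sequence-covering. -/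
theorem statement_8 {X : Type u} [AddCommGroup X] (τ : TopologicalSpace X)
    (hg : @IsTopologicalAddGroup X τ _) (h2 : @T2Space X τ) (hnd : τ ≠ ⊥)
    (τe : TopologicalSpace Z0N) (hτe : IsFinestFor {eSeq} τe) :
    ((∃ S : Set (ℕ → X), IsFinestFor S τ) ↔
      (∃ (I : Type u) (_ : Nonempty I) (τs : TopologicalSpace (I →₀ Z0N)),
        IsFinestFor (SSum τe I) τs ∧
        ∃ p : (I →₀ Z0N) →+ X, Function.Surjective p ∧ τ = τs.coinduced p)) ∧
    ((∃ S : Set (ℕ → X), IsFinestFor S τ) →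
      (∃ (I : Type u) (_ : Nonempty I) (τs : TopologicalSpace (I →₀ Z0N)),
        IsFinestFor (SSum τe I) τs ∧
        ∃ p : (I →₀ Z0N) →+ X, Function.Surjective p ∧ τ = τs.coinduced p ∧
          (∀ y : ℕ → X, TendsToZero τ y →
            ∃ x : ℕ → (I →₀ Z0N), TendsToZero τs x ∧ ∀ n, p (x n) = y n))) := by
  classical
  -- the strong forward implication
  have main : (∃ S : Set (ℕ → X), IsFinestFor S τ) →
      (∃ (I : Type u) (_ : Nonempty I) (τs : TopologicalSpace (I →₀ Z0N)),
        IsFinestFor (SSum τe I) τs ∧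
        ∃ p : (I →₀ Z0N) →+ X, Function.Surjective p ∧ τ = τs.coinduced p ∧
          (∀ y : ℕ → X, TendsToZero τ y →
            ∃ x : ℕ → (I →₀ Z0N), TendsToZero τs x ∧ ∀ n, p (x n) = y n)) := by
    rintro ⟨S, hS⟩
    set I := {u : ℕ → X // TendsToZero τ u} with hIdef
    have hne : Nonempty I := ⟨⟨fun _ => (0 : X), by letI := τ; exact tendsto_const_nhds⟩⟩
    let p : (I →₀ Z0N) →+ X := Finsupp.liftAddHom fun i => qmap i.1
    have hpsingle : ∀ (i : I) (a : Z0N), p (Finsupp.single i a) = qmap i.1 a := fun i a =>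
      Finsupp.liftAddHom_apply_single _ _ _
    have hsurj : Function.Surjective p := by
      intro x
      have hu : TendsToZero τ (fun n => if n = 0 then x else 0) := by
        letI := τ
        apply Filter.Tendsto.congr' _ tendsto_const_nhds
        filter_upwards [Filter.eventually_ge_atTop 1] with n hn
        simp [Nat.one_le_iff_ne_zero.mp hn]
      refine ⟨Finsupp.single (⟨_, hu⟩ : I) (Finsupp.single 0 1), ?_⟩
      rw [hpsingle, qmap_single]
      simp
    -- the SSum family is a TS-set
    have heSeq : TendsToZero τe eSeq := hτe.1.2.2 eSeq rfl
    have hTS : IsTSSet (SSum τe I) := by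
      letI := τe
      haveI : IsTopologicalAddGroup Z0N := hτe.1.1
      haveI : T2Space Z0N := hτe.1.2.1
      refine ⟨TopologicalSpace.induced
        (Finsupp.coeFnAddHom : (I →₀ Z0N) →+ (I → Z0N)) Pi.topologicalSpace, ?_, ?_, ?_⟩
      · exact topologicalAddGroup_induced (Finsupp.coeFnAddHom : (I →₀ Z0N) →+ (I → Z0N))
      · letI := TopologicalSpace.induced
          (Finsupp.coeFnAddHom : (I →₀ Z0N) →+ (I → Z0N)) Pi.topologicalSpace
        exact T2Space.of_injective_continuous
          (DFunLike.coe_injective : Function.Injective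
            (⇑(Finsupp.coeFnAddHom : (I →₀ Z0N) →+ (I → Z0N))))
          continuous_induced_dom
      · rintro v ⟨i, g, hgg, rfl⟩
        rw [tendsToZero_induced_iff]
        unfold TendsToZero
        refine tendsto_pi_nhds.mpr fun j => ?_
        by_cases hij : i = j
        · subst hij
          refine hgg.congr fun n => ?_
          simp
        · refine tendsto_const_nhds.congr fun n => ?_
          simp [Finsupp.single_apply, hij]
    obtain ⟨τs, hτs⟩ := exists_finest hTS
    have hmem : ∀ (i : I) (g : ℕ → Z0N), TendsToZero τe g →
        TendsToZero τs (fun n => Finsupp.single i (g n)) := fun i g hgg =>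
      hτs.1.2.2 _ ⟨i, g, hgg, rfl⟩
    -- p is continuous from τs to τ
    have hle : τs ≤ TopologicalSpace.induced p τ := by
      apply finest_le hτs
      · letI := τ; haveI := hg; exact topologicalAddGroup_induced p
      · rintro v ⟨i, g, hgg, rfl⟩
        rw [tendsToZero_induced_iff]
        have hrw : (fun n => p (Finsupp.single i (g n))) = fun n => qmap i.1 (g n) := by
          funext n; exact hpsingle i (g n)
        rw [hrw]
        exact qmap_tendsto τ hg τe hτe i.2 hgg
    have hle1 : τs.coinduced p ≤ τ := coinduced_le_iff_le_induced.mpr hle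
    -- p maps τs-null sequences to coinduced-null sequences
    have hpnull : ∀ x : ℕ → (I →₀ Z0N), TendsToZero τs x →
        TendsToZero (τs.coinduced p) (fun n => p (x n)) := by
      intro x hx
      have hcont : @Continuous _ _ τs (τs.coinduced p) p := continuous_coinduced_rng
      have := (@Continuous.tendsto _ _ τs (τs.coinduced p) _ hcont 0).comp hx
      rw [map_zero] at this
      exact this
    have hsingle_e : ∀ (u : ℕ → X) (hu : TendsToZero τ u) (n : ℕ),
        p (Finsupp.single (⟨u, hu⟩ : I) (eSeq n)) = u n := by
      intro u hu n
      rw [hpsingle, show eSeq n = Finsupp.single n (1 : ℤ) from rfl, qmap_single, one_smul]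
    have hco : IsTopFor S (τs.coinduced p) := by
      refine ⟨topologicalAddGroup_coinduced_of_surjective τs hτs.1.1 p hsurj,
        t2Space_antitone hle1 h2, fun u hu => ?_⟩
      have hu0 : TendsToZero τ u := hS.1.2.2 u hu
      have hx := hpnull _ (hmem ⟨u, hu0⟩ eSeq heSeq)
      refine hx.congr fun n => ?_
      exact hsingle_e u hu0 n
    have heq : τ = τs.coinduced p := le_antisymm (hS.2 _ hco) hle1
    refine ⟨I, hne, τs, hτs, p, hsurj, heq, ?_⟩
    intro y hy
    exact ⟨fun n => Finsupp.single (⟨y, hy⟩ : I) (eSeq n), hmem _ _ heSeq,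
      fun n => hsingle_e y hy n⟩
  -- the reverse implication
  have rev : (∃ (I : Type u) (_ : Nonempty I) (τs : TopologicalSpace (I →₀ Z0N)),
        IsFinestFor (SSum τe I) τs ∧
        ∃ p : (I →₀ Z0N) →+ X, Function.Surjective p ∧ τ = τs.coinduced p) →
      ∃ S : Set (ℕ → X), IsFinestFor S τ := by
    rintro ⟨I, hne, τs, hτs, p, hsurj, heq⟩
    refine ⟨(fun v => fun n => p (v n)) '' SSum τe I, ⟨⟨hg, h2, ?_⟩, ?_⟩⟩
    · rintro u ⟨v, hv, rfl⟩
      have hvnull := hτs.1.2.2 v hv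
      have hcont : @Continuous _ _ τs (τs.coinduced p) p := continuous_coinduced_rng
      have h := (@Continuous.tendsto _ _ τs (τs.coinduced p) _ hcont 0).comp hvnull
      rw [map_zero] at h
      unfold TendsToZero
      rw [heq]
      exact h
    · intro τ' hτ'
      have hle : τs ≤ TopologicalSpace.induced p τ' := by
        apply finest_le hτs
        · letI := τ'; haveI := hτ'.1; exact topologicalAddGroup_induced p
        · intro v hv
          rw [tendsToZero_induced_iff]
          exact hτ'.2.2 _ ⟨v, hv, rfl⟩
      calc τ = τs.coinduced p := heq
        _ ≤ τ' := coinduced_le_iff_le_induced.mpr hle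
  constructor
  · constructor
    · intro h
      obtain ⟨I, hne, τs, hτs, p, hsurj, heq, _⟩ := main h
      exact ⟨I, hne, τs, hτs, p, hsurj, heq⟩
    · exact rev
  · exact main
end
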